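/- Let α := ∫_{[0,1]^d} r(x)·Φ(x) dx and define the estimator α̂ := (1/n)·Σ_{i=1}^n Y_i²·Φ(X_i) − ∫_{[0,1]^d} g(x)²·Φ(x) dx. Then E[(α̂ − α)²] ≤ 8·(E[U⁴]·‖f‖_∞⁴ + ‖g‖_∞⁴)·(∫_{[0,1]^d} Φ(x)² dx)/n. (This is the first inequality of Lemma 2 of the paper under assumption set H2, stated for a general bounded coefficient function Φ.) -/

import Mathlib

open MeasureTheory ProbabilityTheory

/-! The summands `Yᵢ² Φ(Xᵢ)` are i.i.d. copies of `Z = (f(X) U + g(X))² Φ(X)`, and since `U` is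
independent of `X` with `E U = 0`, `E U² = 1`, one has `E Z = ∫ (f² + g²) Φ` over the cube. Hence
`α̂ − α` is a centred sample mean, with mean square error `Var Z / n ≤ E Z² / n`; the elementary
inequality `(a + b)⁴ ≤ 8 (a⁴ + b⁴)` and independence once more bound `E Z²` by
`8 (E U⁴ ‖f‖_∞⁴ + ‖g‖_∞⁴) ∫ Φ²`. -/

lemma pow_four_add_le (a b : ℝ) : (a + b) ^ 4 ≤ 8 * (a ^ 4 + b ^ 4) := by
  nlinarith [sq_nonneg (a - b), sq_nonneg (a + b), sq_nonneg (a ^ 2 - b ^ 2), sq_nonneg (a * b)]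

lemma mul_add_pow_four_le {a b A B : ℝ} (u : ℝ) (ha : |a| ≤ A) (hb : |b| ≤ B) :
    (a * u + b) ^ 4 ≤ 8 * (A ^ 4 * u ^ 4 + B ^ 4) := by
  have even4 : Even 4 := by decide
  have ha4 : a ^ 4 ≤ A ^ 4 := even4.pow_abs a ▸ pow_le_pow_left₀ (abs_nonneg a) ha 4
  have hb4 : b ^ 4 ≤ B ^ 4 := even4.pow_abs b ▸ pow_le_pow_left₀ (abs_nonneg b) hb 4
  calc (a * u + b) ^ 4 ≤ 8 * (a ^ 4 * u ^ 4 + b ^ 4) := by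
        simpa only [mul_pow] using pow_four_add_le (a * u) b
    _ ≤ 8 * (A ^ 4 * u ^ 4 + B ^ 4) := by gcongr

section SampleMean

variable {Ω ι : Type*} [MeasurableSpace Ω] {P : Measure Ω} [IsProbabilityMeasure P]
  [Fintype ι] [Nonempty ι] {Z : Ω → ℝ} {Zs : ι → Ω → ℝ}

lemma integral_sq_sampleMean_sub_eq_variance_div (hZ : MemLp Z 2 P) (hind : iIndepFun Zs P)
    (hident : ∀ i, IdentDistrib (Zs i) Z P P) :
    ∫ ω, ((Fintype.card ι : ℝ)⁻¹ * ∑ i, Zs i ω - ∫ ω, Z ω ∂P) ^ 2 ∂P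
      = variance Z P / Fintype.card ι := by
  set N : ℝ := (Fintype.card ι : ℝ)
  have hN : N ≠ 0 := by positivity
  have hZs : ∀ i, MemLp (Zs i) 2 P := fun i => (hident i).memLp_iff.2 hZ
  have hsum_mean : ∫ ω, ∑ i, Zs i ω ∂P = N * ∫ ω, Z ω ∂P := by
    rw [integral_finsetSum _ fun i _ => (hZs i).integrable one_le_two]
    simp [(hident _).integral_eq, N]
  have hsum_var : variance (∑ i, Zs i) P = N * variance Z P := by
    rw [IndepFun.variance_sum (fun i _ => hZs i) fun i _ j _ hij => hind.indepFun hij]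
    simp [(hident _).variance_eq, N]
  have hmeas : AEMeasurable (fun ω => N⁻¹ * ∑ i, Zs i ω) P :=
    (Finset.aemeasurable_fun_sum _ fun i _ => (hZs i).aestronglyMeasurable.aemeasurable).const_mul
      _
  calc ∫ ω, (N⁻¹ * ∑ i, Zs i ω - ∫ ω, Z ω ∂P) ^ 2 ∂P
      = variance (fun ω => N⁻¹ * ∑ i, Zs i ω) P := by
        rw [variance_eq_integral hmeas, integral_const_mul, hsum_mean, inv_mul_cancel_left₀ hN]
    _ = N⁻¹ ^ 2 * variance (∑ i, Zs i) P := by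
        rw [← variance_const_mul]; congr with ω; simp
    _ = variance Z P / N := by rw [hsum_var]; field_simp

end SampleMean

section RegressionModel

variable {Ω E : Type*} [MeasurableSpace Ω] {P : Measure Ω}
  {X : Ω → E} {U : Ω → ℝ} {s : Set E} {f g Φ : E → ℝ} {A B C : ℝ}

lemma ae_sq_mul_add_sq_mul_le (hXs : ∀ᵐ ω ∂P, X ω ∈ s) (hfA : ∀ x ∈ s, |f x| ≤ A)
    (hgB : ∀ x ∈ s, |g x| ≤ B) :
    ∀ᵐ ω ∂P, ((f (X ω) * U ω + g (X ω)) ^ 2 * Φ (X ω)) ^ 2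
      ≤ 8 * (A ^ 4 * U ω ^ 4 + B ^ 4) * Φ (X ω) ^ 2 := by
  filter_upwards [hXs] with ω hω
  calc _ = (f (X ω) * U ω + g (X ω)) ^ 4 * Φ (X ω) ^ 2 := by ring
    _ ≤ _ := by gcongr; exact mul_add_pow_four_le _ (hfA _ hω) (hgB _ hω)

variable [MeasurableSpace E]

lemma ae_mem_of_map_eq_restrict {μ : Measure E} (hX : AEMeasurable X P) (hs : MeasurableSet s)
    (hlaw : P.map X = μ.restrict s) : ∀ᵐ ω ∂P, X ω ∈ s :=
  ae_of_ae_map hX (hlaw ▸ ae_restrict_mem hs)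

lemma integrable_comp_of_abs_le [IsFiniteMeasure P] {q : E → ℝ} (hX : Measurable X)
    (hq : Measurable q) (hXs : ∀ᵐ ω ∂P, X ω ∈ s) (hqC : ∀ x ∈ s, |q x| ≤ C) :
    Integrable (fun ω => q (X ω)) P := by
  refine Integrable.mono' (integrable_const C) (hq.comp hX).aestronglyMeasurable ?_
  filter_upwards [hXs] with ω hω using hqC _ hω

lemma integral_mul_sq_add_mul_add {V W Y : Ω → ℝ} (hV : Integrable V P) (hW : Integrable W P)
    (hY : Integrable Y P) (hU : Integrable U P) (hU2 : Integrable (fun ω => U ω ^ 2) P)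
    (hVU : IndepFun V (fun ω => U ω ^ 2) P) (hWU : IndepFun W U P) :
    ∫ ω, (V ω * U ω ^ 2 + W ω * U ω + Y ω) ∂P
      = (∫ ω, V ω ∂P) * (∫ ω, U ω ^ 2 ∂P) + (∫ ω, W ω ∂P) * (∫ ω, U ω ∂P) + ∫ ω, Y ω ∂P := by
  have hVU2 : Integrable (fun ω => V ω * U ω ^ 2) P := hVU.integrable_mul hV hU2
  have hWU1 : Integrable (fun ω => W ω * U ω) P := hWU.integrable_mul hW hU
  have hsum : Integrable (fun ω => V ω * U ω ^ 2 + W ω * U ω) P := hVU2.add hWU1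
  rw [integral_add hsum hY, integral_add hVU2 hWU1,
    hVU.integral_fun_mul_eq_mul_integral hV.aestronglyMeasurable hU2.aestronglyMeasurable,
    hWU.integral_fun_mul_eq_mul_integral hW.aestronglyMeasurable hU.aestronglyMeasurable]

variable [IsProbabilityMeasure P]

lemma integral_mul_add_sq_mul (hXU : IndepFun X U P) (hX : Measurable X)
    (hU : Integrable U P) (hU_mean : ∫ ω, U ω ∂P = 0)
    (hU2 : Integrable (fun ω => U ω ^ 2) P) (hU2_mean : ∫ ω, U ω ^ 2 ∂P = 1)
    (hf : Measurable f) (hg : Measurable g) (hΦ : Measurable Φ) (hXs : ∀ᵐ ω ∂P, X ω ∈ s)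
    (hfA : ∀ x ∈ s, |f x| ≤ A) (hgB : ∀ x ∈ s, |g x| ≤ B) (hΦC : ∀ x ∈ s, |Φ x| ≤ C) :
    ∫ ω, (f (X ω) * U ω + g (X ω)) ^ 2 * Φ (X ω) ∂P
      = ∫ ω, f (X ω) ^ 2 * Φ (X ω) ∂P + ∫ ω, g (X ω) ^ 2 * Φ (X ω) ∂P := by
  obtain ⟨ω₀, hω₀⟩ := hXs.exists
  have hA : 0 ≤ A := (abs_nonneg _).trans (hfA _ hω₀)
  have hB : 0 ≤ B := (abs_nonneg _).trans (hgB _ hω₀)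
  have hf2Φ : Integrable (fun ω => f (X ω) ^ 2 * Φ (X ω)) P :=
    integrable_comp_of_abs_le (q := fun x => f x ^ 2 * Φ x) (C := A ^ 2 * C) hX (by fun_prop) hXs
      fun x hx => by simp only [abs_mul, abs_pow]; gcongr; exacts [hfA x hx, hΦC x hx]
  have hfgΦ : Integrable (fun ω => 2 * f (X ω) * g (X ω) * Φ (X ω)) P :=
    integrable_comp_of_abs_le (q := fun x => 2 * f x * g x * Φ x) (C := 2 * A * B * C) hX
      (by fun_prop) hXs fun x hx => by
        simp only [abs_mul, abs_two]; gcongr; exacts [hfA x hx, hgB x hx, hΦC x hx]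
  have hg2Φ : Integrable (fun ω => g (X ω) ^ 2 * Φ (X ω)) P :=
    integrable_comp_of_abs_le (q := fun x => g x ^ 2 * Φ x) (C := B ^ 2 * C) hX (by fun_prop) hXs
      fun x hx => by simp only [abs_mul, abs_pow]; gcongr; exacts [hgB x hx, hΦC x hx]
  calc ∫ ω, (f (X ω) * U ω + g (X ω)) ^ 2 * Φ (X ω) ∂P
      = ∫ ω, (f (X ω) ^ 2 * Φ (X ω) * U ω ^ 2 + 2 * f (X ω) * g (X ω) * Φ (X ω) * U ω
          + g (X ω) ^ 2 * Φ (X ω)) ∂P := by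
        congr with ω; ring
    _ = _ := integral_mul_sq_add_mul_add hf2Φ hfgΦ hg2Φ hU hU2
        (hXU.comp (φ := fun x => f x ^ 2 * Φ x) (ψ := fun u => u ^ 2) (by fun_prop) (by fun_prop))
        (hXU.comp (φ := fun x => 2 * f x * g x * Φ x) (ψ := id) (by fun_prop) measurable_id)
    _ = _ := by rw [hU_mean, hU2_mean]; ring

lemma integrable_fourth_moment_majorant (hXU : IndepFun X U P)
    (hU4 : Integrable (fun ω => U ω ^ 4) P) (hΦ : Measurable Φ)
    (hΦ2 : Integrable (fun ω => Φ (X ω) ^ 2) P) :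
    Integrable (fun ω => 8 * (A ^ 4 * U ω ^ 4 + B ^ 4) * Φ (X ω) ^ 2) P :=
  (hXU.symm.comp (φ := fun u => 8 * (A ^ 4 * u ^ 4 + B ^ 4)) (ψ := fun x => Φ x ^ 2)
    (by fun_prop) (by fun_prop)).integrable_mul
    (((hU4.const_mul _).add (integrable_const _)).const_mul _) hΦ2

lemma memLp_two_mul_add_sq_mul (hXU : IndepFun X U P) (hX : Measurable X) (hU : Measurable U)
    (hU4 : Integrable (fun ω => U ω ^ 4) P) (hf : Measurable f) (hg : Measurable g)
    (hΦ : Measurable Φ) (hXs : ∀ᵐ ω ∂P, X ω ∈ s) (hfA : ∀ x ∈ s, |f x| ≤ A)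
    (hgB : ∀ x ∈ s, |g x| ≤ B) (hΦ2 : Integrable (fun ω => Φ (X ω) ^ 2) P) :
    MemLp (fun ω => (f (X ω) * U ω + g (X ω)) ^ 2 * Φ (X ω)) 2 P := by
  have hmeas : Measurable fun ω => (f (X ω) * U ω + g (X ω)) ^ 2 * Φ (X ω) := by fun_prop
  refine (memLp_two_iff_integrable_sq hmeas.aestronglyMeasurable).2 ?_
  refine (integrable_fourth_moment_majorant (A := A) (B := B) hXU hU4 hΦ hΦ2).mono'
    (by fun_prop) ?_
  filter_upwards [ae_sq_mul_add_sq_mul_le hXs hfA hgB] with ω hω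
  rwa [Real.norm_of_nonneg (sq_nonneg _)]

lemma integral_sq_mul_add_sq_mul_le (hXU : IndepFun X U P) (hU : Measurable U)
    (hU4 : Integrable (fun ω => U ω ^ 4) P) (hΦ : Measurable Φ) (hXs : ∀ᵐ ω ∂P, X ω ∈ s)
    (hfA : ∀ x ∈ s, |f x| ≤ A) (hgB : ∀ x ∈ s, |g x| ≤ B)
    (hΦ2 : Integrable (fun ω => Φ (X ω) ^ 2) P) :
    ∫ ω, ((f (X ω) * U ω + g (X ω)) ^ 2 * Φ (X ω)) ^ 2 ∂P
      ≤ 8 * ((∫ ω, U ω ^ 4 ∂P) * A ^ 4 + B ^ 4) * ∫ ω, Φ (X ω) ^ 2 ∂P := by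
  have hindep : IndepFun (fun ω => 8 * (A ^ 4 * U ω ^ 4 + B ^ 4)) (fun ω => Φ (X ω) ^ 2) P :=
    hXU.symm.comp (φ := fun u => 8 * (A ^ 4 * u ^ 4 + B ^ 4)) (ψ := fun x => Φ x ^ 2)
      (by fun_prop) (by fun_prop)
  calc ∫ ω, ((f (X ω) * U ω + g (X ω)) ^ 2 * Φ (X ω)) ^ 2 ∂P
      ≤ ∫ ω, 8 * (A ^ 4 * U ω ^ 4 + B ^ 4) * Φ (X ω) ^ 2 ∂P :=
        integral_mono_of_nonneg (.of_forall fun _ => sq_nonneg _)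
          (integrable_fourth_moment_majorant hXU hU4 hΦ hΦ2) (ae_sq_mul_add_sq_mul_le hXs hfA hgB)
    _ = 8 * ((∫ ω, U ω ^ 4 ∂P) * A ^ 4 + B ^ 4) * ∫ ω, Φ (X ω) ^ 2 ∂P := by
        rw [hindep.integral_fun_mul_eq_mul_integral (by fun_prop) hΦ2.aestronglyMeasurable,
          integral_const_mul, integral_add (hU4.const_mul _) (integrable_const _),
          integral_const_mul]
        simp [mul_comm]

end RegressionModel

theorem linear_coefficient_MSE_H2_general
    {Ω : Type*} [MeasurableSpace Ω] (P : Measure Ω) [IsProbabilityMeasure P]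
    (d : ℕ)
    (X : Ω → (Fin d → ℝ)) (U : Ω → ℝ)
    (hXm : Measurable X) (hUm : Measurable U)
    -- X is uniformly distributed on the cube [0,1]^d
    (hXlaw : Measure.map X P = volume.restrict (Set.Icc (0 : Fin d → ℝ) 1))
    -- U independent of X, E[U] = 0, E[U²] = 1, E[U⁴] < ∞
    (hXU : IndepFun X U P)
    (hUint : Integrable U P) (hUmean : ∫ ω, U ω ∂P = 0)
    (hU2int : Integrable (fun ω => (U ω) ^ 2) P)
    (hU2 : ∫ ω, (U ω) ^ 2 ∂P = 1)
    (hU4 : Integrable (fun ω => (U ω) ^ 4) P)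
    -- f, g bounded measurable on the cube, r = f²
    (f g : (Fin d → ℝ) → ℝ) (hfm : Measurable f) (hgm : Measurable g)
    (Cf : ℝ) (hf : ∀ x ∈ Set.Icc (0 : Fin d → ℝ) 1, |f x| ≤ Cf)
    (Cg : ℝ) (hg : ∀ x ∈ Set.Icc (0 : Fin d → ℝ) 1, |g x| ≤ Cg)
    (r : (Fin d → ℝ) → ℝ) (hr : ∀ x, r x = (f x) ^ 2)
    -- the i.i.d. copies (Xᵢ, Uᵢ), i = 1,…,n, of (X, U), and Yᵢ = f(Xᵢ)Uᵢ + g(Xᵢ)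
    (n : ℕ) (hn : 1 ≤ n)
    (Xs : Fin n → Ω → (Fin d → ℝ)) (Us : Fin n → Ω → ℝ)
    (hiid : iIndepFun (fun i ω => (Xs i ω, Us i ω)) P)
    (hident : ∀ i, IdentDistrib (fun ω => (Xs i ω, Us i ω))
      (fun ω => (X ω, U ω)) P P)
    -- Φ bounded measurable on the cube
    (Φ : (Fin d → ℝ) → ℝ) (hΦm : Measurable Φ)
    (CΦ : ℝ) (hΦ : ∀ x ∈ Set.Icc (0 : Fin d → ℝ) 1, |Φ x| ≤ CΦ) :
    ∫ ω, ((1 / (n : ℝ)) * (∑ i, (f (Xs i ω) * Us i ω + g (Xs i ω)) ^ 2 * Φ (Xs i ω))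
            - (∫ x in Set.Icc (0 : Fin d → ℝ) 1, (g x) ^ 2 * Φ x)
            - ∫ x in Set.Icc (0 : Fin d → ℝ) 1, r x * Φ x) ^ 2 ∂P
      ≤ 8 * ((∫ ω, (U ω) ^ 4 ∂P) * (⨆ x : (Set.Icc (0 : Fin d → ℝ) 1), |f x.1|) ^ 4
              + (⨆ x : (Set.Icc (0 : Fin d → ℝ) 1), |g x.1|) ^ 4)
          * (∫ x in Set.Icc (0 : Fin d → ℝ) 1, (Φ x) ^ 2) / n := by
  set S := Set.Icc (0 : Fin d → ℝ) 1
  have hfF : ∀ x ∈ S, |f x| ≤ ⨆ y : S, |f y.1| := fun x hx =>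
    le_ciSup (f := fun y : S => |f y.1|) ⟨Cf, by rintro _ ⟨y, rfl⟩; exact hf y y.2⟩ ⟨x, hx⟩
  have hgG : ∀ x ∈ S, |g x| ≤ ⨆ y : S, |g y.1| := fun x hx =>
    le_ciSup (f := fun y : S => |g y.1|) ⟨Cg, by rintro _ ⟨y, rfl⟩; exact hg y y.2⟩ ⟨x, hx⟩
  have hXS : ∀ᵐ ω ∂P, X ω ∈ S :=
    ae_mem_of_map_eq_restrict hXm.aemeasurable measurableSet_Icc hXlaw
  have hlaw : ∀ q : (Fin d → ℝ) → ℝ, Measurable q → ∫ ω, q (X ω) ∂P = ∫ x in S, q x :=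
    fun q hq => by rw [← hXlaw, integral_map hXm.aemeasurable hq.aestronglyMeasurable]
  have hΦ2 : Integrable (fun ω => Φ (X ω) ^ 2) P :=
    integrable_comp_of_abs_le (q := fun x => Φ x ^ 2) (C := CΦ ^ 2) hXm (by fun_prop) hXS
      fun x hx => by simp only [abs_pow]; gcongr; exact hΦ x hx
  set h : (Fin d → ℝ) × ℝ → ℝ := fun p => (f p.1 * p.2 + g p.1) ^ 2 * Φ p.1
  have hh : Measurable h := by fun_prop
  have hmean : ∫ ω, h (X ω, U ω) ∂P
      = (∫ x in S, g x ^ 2 * Φ x) + ∫ x in S, r x * Φ x := by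
    simp only [h, hr]
    rw [integral_mul_add_sq_mul hXU hXm hUint hUmean hU2int hU2 hfm hgm hΦm hXS hfF hgG hΦ,
      hlaw (fun x => f x ^ 2 * Φ x) (by fun_prop),
      hlaw (fun x => g x ^ 2 * Φ x) (by fun_prop), add_comm]
  have : Nonempty (Fin n) := ⟨⟨0, hn⟩⟩
  have hsample := integral_sq_sampleMean_sub_eq_variance_div
    (memLp_two_mul_add_sq_mul hXU hXm hUm hU4 hfm hgm hΦm hXS hfF hgG hΦ2)
    (hiid.comp (fun _ => h) fun _ => hh) fun i => (hident i).comp hh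
  rw [Fintype.card_fin, hmean] at hsample
  calc _ = variance (fun ω => h (X ω, U ω)) P / n := by
        rw [← hsample]; simp only [one_div, sub_sub]; rfl
    _ ≤ (∫ ω, h (X ω, U ω) ^ 2 ∂P) / n := by
        gcongr
        exact variance_le_expectation_sq (hh.comp (hXm.prodMk hUm)).aestronglyMeasurable
    _ ≤ _ := by
        gcongr
        rw [← hlaw (fun x => Φ x ^ 2) (by fun_prop)]
        exact integral_sq_mul_add_sq_mul_le hXU hUm hU4 hΦm hXS hfF hgG hΦ2

/-- first inequality of Lemma 2 of the paper, assumption set H2.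
With `V = g(X)`, `α = ∫ r Φ` and `α̂ = (1/n) Σᵢ Yᵢ² Φ(Xᵢ) − ∫ g² Φ`, one has
`E[(α̂ − α)²] ≤ 8 (E[U⁴] ‖f‖_∞⁴ + ‖g‖_∞⁴) (∫ Φ²) / n`. -/
theorem linear_coefficient_MSE_H2
    {Ω : Type*} [MeasurableSpace Ω] (P : Measure Ω) [IsProbabilityMeasure P]
    (d : ℕ) (hd : 1 ≤ d)
    (X : Ω → (Fin d → ℝ)) (U : Ω → ℝ)
    (hXm : Measurable X) (hUm : Measurable U)
    -- X is uniformly distributed on the cube [0,1]^d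
    (hXlaw : Measure.map X P = volume.restrict (Set.Icc (0 : Fin d → ℝ) 1))
    -- U independent of X, E[U] = 0, E[U²] = 1, E[U⁴] < ∞
    (hXU : IndepFun X U P)
    (hUint : Integrable U P) (hUmean : ∫ ω, U ω ∂P = 0)
    (hU2int : Integrable (fun ω => (U ω) ^ 2) P)
    (hU2 : ∫ ω, (U ω) ^ 2 ∂P = 1)
    (hU4 : Integrable (fun ω => (U ω) ^ 4) P)
    -- f, g bounded measurable on the cube, r = f²
    (f g : (Fin d → ℝ) → ℝ) (hfm : Measurable f) (hgm : Measurable g)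
    (Cf : ℝ) (hf : ∀ x ∈ Set.Icc (0 : Fin d → ℝ) 1, |f x| ≤ Cf)
    (Cg : ℝ) (hg : ∀ x ∈ Set.Icc (0 : Fin d → ℝ) 1, |g x| ≤ Cg)
    (r : (Fin d → ℝ) → ℝ) (hr : ∀ x, r x = (f x) ^ 2)
    -- the i.i.d. copies (Xᵢ, Uᵢ), i = 1,…,n, of (X, U), and Yᵢ = f(Xᵢ)Uᵢ + g(Xᵢ)
    (n : ℕ) (hn : 1 ≤ n)
    (Xs : Fin n → Ω → (Fin d → ℝ)) (Us : Fin n → Ω → ℝ)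
    (hXsm : ∀ i, Measurable (Xs i)) (hUsm : ∀ i, Measurable (Us i))
    (hiid : iIndepFun (fun i ω => (Xs i ω, Us i ω)) P)
    (hident : ∀ i, IdentDistrib (fun ω => (Xs i ω, Us i ω))
      (fun ω => (X ω, U ω)) P P)
    -- Φ bounded measurable on the cube
    (Φ : (Fin d → ℝ) → ℝ) (hΦm : Measurable Φ)
    (CΦ : ℝ) (hΦ : ∀ x ∈ Set.Icc (0 : Fin d → ℝ) 1, |Φ x| ≤ CΦ) :
    ∫ ω, ((1 / (n : ℝ)) * (∑ i, (f (Xs i ω) * Us i ω + g (Xs i ω)) ^ 2 * Φ (Xs i ω))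
            - (∫ x in Set.Icc (0 : Fin d → ℝ) 1, (g x) ^ 2 * Φ x)
            - ∫ x in Set.Icc (0 : Fin d → ℝ) 1, r x * Φ x) ^ 2 ∂P
      ≤ 8 * ((∫ ω, (U ω) ^ 4 ∂P) * (⨆ x : (Set.Icc (0 : Fin d → ℝ) 1), |f x.1|) ^ 4
              + (⨆ x : (Set.Icc (0 : Fin d → ℝ) 1), |g x.1|) ^ 4)
          * (∫ x in Set.Icc (0 : Fin d → ℝ) 1, (Φ x) ^ 2) / n :=
  linear_coefficient_MSE_H2_general P d X U hXm hUm hXlaw hXU hUint hUmean hU2int hU2 hU4 f g hfm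
    hgm Cf hf Cg hg r hr n hn Xs Us hiid hident Φ hΦm CΦ hΦ
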